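/- arXiv:1708.07697 — 2 statements merged into one kernel-verified Lean document; each statement's English description precedes it below -/
import Mathlib

section
/- Every 2×2 complex matrix ρ is reconstructed from its qubit tomogram via the quantizer: ρ = Σ_{m ∈ {−1/2,1/2}} (1/(4π)) ∫₀^{2π} ∫₀^{π} D(m,α,β) · Tr(ρ · U(m,α,β)) · sin β dβ dα, where the integral of a matrix-valued function is taken entrywise. -/
open Matrix Real MeasureTheory intervalIntegral

noncomputable def sigmaX : Matrix (Fin 2) (Fin 2) ℂ := !![0, 1; 1, 0]
noncomputable def sigmaY : Matrix (Fin 2) (Fin 2) ℂ := !![0, -Complex.I; Complex.I, 0]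
noncomputable def sigmaZ : Matrix (Fin 2) (Fin 2) ℂ := !![1, 0; 0, -1]

/-- The qubit de-quantizer U(m, α, β). -/
noncomputable def dequantizer (m α β : ℝ) : Matrix (Fin 2) (Fin 2) ℂ :=
  (1/2 : ℂ) • (1 : Matrix (Fin 2) (Fin 2) ℂ)
    - ((m * Real.cos α * Real.sin β : ℝ) : ℂ) • sigmaX
    - ((m * Real.sin α * Real.sin β : ℝ) : ℂ) • sigmaY
    + ((m * Real.cos β : ℝ) : ℂ) • sigmaZ

/-- The qubit tomogram of a 2×2 complex matrix ρ. -/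
noncomputable def tomogram (ρ : Matrix (Fin 2) (Fin 2) ℂ) (m α β : ℝ) : ℂ :=
  (ρ * dequantizer m α β).trace

/-- The qubit quantizer D(m, α, β) = 3 U(m, α, β) − I. -/
noncomputable def quantizer (m α β : ℝ) : Matrix (Fin 2) (Fin 2) ℂ :=
  (3 : ℂ) • dequantizer m α β - (1 : Matrix (Fin 2) (Fin 2) ℂ)

/-!
Write `n(α, β)` for the unit vector in spherical coordinates (up to the signs of its first two
components) and `τ = n · σ`. Then `U(m) = 1/2 + m τ` and `D(m) = 1/2 + 3 m τ`, so summing over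
`m = ±1/2` gives `Tr ρ / 2 + (3/2) Tr(ρ τ) τ`, a quadratic polynomial in `n`. Averaging over the
sphere, `⟨n_a n_b⟩ = δ_ab / 3`, and the Pauli completeness relation
`∑ₐ Tr(ρ σₐ) σₐ = 2 ρ - Tr ρ` turns the average into `ρ`.
-/

noncomputable def pauli : Fin 3 → Matrix (Fin 2) (Fin 2) ℂ := ![sigmaX, sigmaY, sigmaZ]

theorem sum_trace_mul_pauli_smul_pauli (ρ : Matrix (Fin 2) (Fin 2) ℂ) :
    ∑ a, (ρ * pauli a).trace • pauli a = (2 : ℂ) • ρ - ρ.trace • 1 := by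
  ext i j
  fin_cases i <;> fin_cases j <;>
    simp [Fin.sum_univ_three, pauli, sigmaX, sigmaY, sigmaZ, trace_fin_two, mul_apply] <;>
    ring_nf <;> simp [Complex.I_sq] <;> ring

noncomputable def azimuthalFactor (α : ℝ) : Fin 3 → ℝ := ![-cos α, -sin α, 1]

noncomputable def polarFactor (β : ℝ) : Fin 3 → ℝ := ![sin β, sin β, cos β]

/-- Split into α- and β-dependent factors so that sphere integrals of its monomials factor;
the signs are those of the de-quantizer (`dequantizer_eq`). -/
noncomputable def blochDirection (α β : ℝ) : Fin 3 → ℝ := azimuthalFactor α * polarFactor β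

noncomputable def blochMatrix (α β : ℝ) : Matrix (Fin 2) (Fin 2) ℂ :=
  ∑ a, (blochDirection α β a : ℂ) • pauli a

theorem blochMatrix_apply (α β : ℝ) (i j : Fin 2) :
    blochMatrix α β i j = ∑ a, (blochDirection α β a : ℂ) * pauli a i j := by
  simp [blochMatrix, Matrix.sum_apply]

theorem trace_mul_blochMatrix (ρ : Matrix (Fin 2) (Fin 2) ℂ) (α β : ℝ) :
    (ρ * blochMatrix α β).trace = ∑ b, (blochDirection α β b : ℂ) * (ρ * pauli b).trace := by
  simp [blochMatrix, Finset.mul_sum, trace_sum]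

theorem dequantizer_eq (m α β : ℝ) :
    dequantizer m α β = (1 / 2 : ℂ) • 1 + (m : ℂ) • blochMatrix α β := by
  simp only [dequantizer, blochMatrix, Fin.sum_univ_three, blochDirection, azimuthalFactor,
    polarFactor, pauli, Pi.mul_apply, cons_val_zero, cons_val_one, cons_val, Complex.ofReal_mul,
    Complex.ofReal_neg, Complex.ofReal_one]
  module

theorem quantizer_eq (m α β : ℝ) :
    quantizer m α β = (1 / 2 : ℂ) • 1 + (3 * m : ℂ) • blochMatrix α β := by
  rw [quantizer, dequantizer_eq]
  module

theorem tomogram_smul_quantizer_add (ρ : Matrix (Fin 2) (Fin 2) ℂ) (α β : ℝ) :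
    tomogram ρ (1 / 2) α β • quantizer (1 / 2) α β
      + tomogram ρ (-(1 / 2)) α β • quantizer (-(1 / 2)) α β
      = (ρ.trace / 2) • 1 + (3 / 2 * (ρ * blochMatrix α β).trace) • blochMatrix α β := by
  simp only [tomogram, quantizer_eq, dequantizer_eq, mul_add, mul_smul_comm, mul_one, trace_add,
    trace_smul, smul_eq_mul]
  push_cast
  module

theorem quantizer_apply_mul_tomogram_add (ρ : Matrix (Fin 2) (Fin 2) ℂ) (α β : ℝ) (i j : Fin 2) :
    quantizer (1 / 2) α β i j * tomogram ρ (1 / 2) α β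
      + quantizer (-(1 / 2)) α β i j * tomogram ρ (-(1 / 2)) α β
      = ρ.trace / 2 * (1 : Matrix (Fin 2) (Fin 2) ℂ) i j + ∑ a, ∑ b,
          ((blochDirection α β a * blochDirection α β b : ℝ) : ℂ)
            * (3 / 2 * (ρ * pauli b).trace * pauli a i j) := by
  have h := congrFun (congrFun (tomogram_smul_quantizer_add ρ α β) i) j
  simp only [Matrix.add_apply, Matrix.smul_apply, smul_eq_mul, trace_mul_blochMatrix,
    blochMatrix_apply, Fin.sum_univ_three] at h
  simp only [Fin.sum_univ_three, Complex.ofReal_mul]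
  linear_combination h

noncomputable def sphereIntegral (f : ℝ → ℝ → ℂ) : ℂ :=
  ∫ α in (0 : ℝ)..(2 * π), ∫ β in (0 : ℝ)..π, f α β * (sin β : ℂ)

section Linearity

variable {f g : ℝ → ℝ → ℂ}

theorem intervalIntegrable_mul_sin (hf : Continuous f.uncurry) (α a b : ℝ) :
    IntervalIntegrable (fun β => f α β * (sin β : ℂ)) volume a b :=
  Continuous.intervalIntegrable (by fun_prop) a b

theorem intervalIntegrable_integral_mul_sin (hf : Continuous f.uncurry) (a b c d : ℝ) :
    IntervalIntegrable (fun α => ∫ β in c..d, f α β * (sin β : ℂ)) volume a b :=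
  Continuous.intervalIntegrable
    (continuous_parametric_intervalIntegral_of_continuous' (by fun_prop) c d) a b

theorem sphereIntegral_add (hf : Continuous f.uncurry) (hg : Continuous g.uncurry) :
    sphereIntegral (fun α β => f α β + g α β) = sphereIntegral f + sphereIntegral g := by
  simp only [sphereIntegral, add_mul]
  simp only [intervalIntegral.integral_add (intervalIntegrable_mul_sin hf _ _ _)
    (intervalIntegrable_mul_sin hg _ _ _)]
  exact intervalIntegral.integral_add (intervalIntegrable_integral_mul_sin hf _ _ _ _)
    (intervalIntegrable_integral_mul_sin hg _ _ _ _)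

theorem sphereIntegral_finsetSum {ι : Type*} (s : Finset ι) {f : ι → ℝ → ℝ → ℂ}
    (hf : ∀ i ∈ s, Continuous (f i).uncurry) :
    sphereIntegral (fun α β => ∑ i ∈ s, f i α β) = ∑ i ∈ s, sphereIntegral (f i) := by
  simp only [sphereIntegral, Finset.sum_mul]
  simp only [intervalIntegral.integral_finsetSum fun i hi =>
    intervalIntegrable_mul_sin (hf i hi) _ _ _]
  exact intervalIntegral.integral_finsetSum fun i hi =>
    intervalIntegrable_integral_mul_sin (hf i hi) _ _ _ _

theorem sphereIntegral_mul_const (f : ℝ → ℝ → ℂ) (c : ℂ) :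
    sphereIntegral (fun α β => f α β * c) = sphereIntegral f * c := by
  simp only [sphereIntegral, mul_right_comm _ c, intervalIntegral.integral_mul_const]

end Linearity

theorem sphereIntegral_const (c : ℂ) : sphereIntegral (fun _ _ => c) = 4 * π * c := by
  simp only [sphereIntegral, intervalIntegral.integral_const_mul, intervalIntegral.integral_ofReal,
    integral_sin, cos_zero, cos_pi, intervalIntegral.integral_const, Complex.real_smul]
  push_cast
  ring

theorem sphereIntegral_ofReal_mul (f g : ℝ → ℝ) :
    sphereIntegral (fun α β => ((f α * g β : ℝ) : ℂ)) =
      ((∫ α in (0 : ℝ)..(2 * π), f α) * ∫ β in (0 : ℝ)..π, g β * sin β : ℝ) := by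
  simp only [sphereIntegral, ← Complex.ofReal_mul, intervalIntegral.integral_ofReal, mul_assoc,
    intervalIntegral.integral_const_mul, intervalIntegral.integral_mul_const]

theorem sphereIntegral_blochDirection_mul (a b : Fin 3) :
    sphereIntegral (fun α β => ((blochDirection α β a * blochDirection α β b : ℝ) : ℂ)) =
      if a = b then 4 * (π : ℂ) / 3 else 0 := by
  have hsplit : ∀ α β, blochDirection α β a * blochDirection α β b =
      (azimuthalFactor α a * azimuthalFactor α b) * (polarFactor β a * polarFactor β b) := by
    intro α β
    simp only [blochDirection, Pi.mul_apply]
    ring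
  simp only [hsplit, sphereIntegral_ofReal_mul]
  fin_cases a <;> fin_cases b <;>
    simp [azimuthalFactor, polarFactor, ← sq, ← pow_succ, mul_comm (cos _) (sin _),
      mul_comm (cos _ ^ 2) (sin _)] <;>
    ring

theorem continuous_blochDirection_apply (a : Fin 3) :
    Continuous fun p : ℝ × ℝ => blochDirection p.1 p.2 a := by
  fin_cases a <;>
    simp only [blochDirection, azimuthalFactor, polarFactor, Pi.mul_apply, Fin.zero_eta,
      Fin.mk_one, Fin.reduceFinMk, cons_val_zero, cons_val_one, cons_val] <;>
    fun_prop

theorem sphereIntegral_const_add_quadratic (c : ℂ) (M : Fin 3 → Fin 3 → ℂ) :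
    sphereIntegral (fun α β => c + ∑ a, ∑ b,
        ((blochDirection α β a * blochDirection α β b : ℝ) : ℂ) * M a b) =
      4 * π * c + 4 * π / 3 * ∑ a, M a a := by
  have hn := continuous_blochDirection_apply
  have hterm (a b : Fin 3) : Continuous (Function.uncurry fun α β =>
      ((blochDirection α β a * blochDirection α β b : ℝ) : ℂ) * M a b) := by
    unfold Function.uncurry
    fun_prop
  rw [sphereIntegral_add continuous_const (by unfold Function.uncurry; fun_prop),
    sphereIntegral_const, sphereIntegral_finsetSum _ fun a _ => by unfold Function.uncurry; fun_prop]
  simp only [sphereIntegral_finsetSum _ fun b _ => hterm _ b, sphereIntegral_mul_const,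
    sphereIntegral_blochDirection_mul, ite_mul, zero_mul, Finset.sum_ite_eq, Finset.mem_univ,
    if_true, Finset.mul_sum]

theorem state_reconstruction (ρ : Matrix (Fin 2) (Fin 2) ℂ) :
    ∀ i j : Fin 2,
      ρ i j =
      (1 / (4 * (Real.pi : ℂ))) *
        ∫ α in (0:ℝ)..(2 * Real.pi), ∫ β in (0:ℝ)..Real.pi,
          (quantizer (1/2) α β i j * (ρ * dequantizer (1/2) α β).trace
            + quantizer (-(1/2)) α β i j * (ρ * dequantizer (-(1/2)) α β).trace)
          * (Real.sin β : ℂ) := by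
  intro i j
  have hcomplete := congrFun (congrFun (sum_trace_mul_pauli_smul_pauli ρ) i) j
  simp only [Matrix.sum_apply, Matrix.smul_apply, smul_eq_mul, Matrix.sub_apply] at hcomplete
  change ρ i j = 1 / (4 * (π : ℂ)) * sphereIntegral fun α β =>
    quantizer (1 / 2) α β i j * tomogram ρ (1 / 2) α β
      + quantizer (-(1 / 2)) α β i j * tomogram ρ (-(1 / 2)) α β
  simp only [quantizer_apply_mul_tomogram_add, sphereIntegral_const_add_quadratic, mul_assoc,
    ← Finset.mul_sum, hcomplete]
  field_simp
  ring
end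

section
/- Let α > 0, let k be a real number, and let ω : ℝ → ℂ be an integrable function. Then for every x ∈ ℝ: (1/(2π)) ∫_ℝ e^{−i x y} e^{−α y²/2} ( ∫_ℝ e^{i k y x'} ω(x') dx' ) dy = (1/√(2π α)) ∫_ℝ e^{−(x − k x')²/(2α)} ω(x') dx'. In particular, the one-mode covariant bosonic Gaussian channel acting on optical tomograms, defined via the characteristic-function transformation F(q,p) → F(kq,kp) e^{−α(q²+p²)/2}, is represented by the Gaussian integral kernel (1/√(2πα)) e^{−(x−kx')²/(2α)}. -/
/-!
Since the kernel e^{iky x'} has modulus one, the double integral converges absolutely and Fubini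
moves the y-integral inside. There it is the inverse Fourier transform of the Gaussian
e^{−αy²/2} at x − kx', i.e. the heat kernel √(2π/α)·e^{−(x−kx')²/(2α)}; the prefactor 1/(2π)
turns √(2π/α) into 1/√(2πα).
-/

open Real MeasureTheory Complex

theorem ofReal_cpow_one_div_two_eq_sqrt {r : ℝ} (hr : 0 ≤ r) :
    (r : ℂ) ^ (1 / 2 : ℂ) = (√r : ℂ) := by
  rw [Real.sqrt_eq_rpow, ofReal_cpow hr]
  norm_num

theorem integrable_cexp_neg_I_mul_mul_gaussian {α : ℝ} (hα : 0 < α) (c : ℂ) :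
    Integrable fun y : ℝ => cexp (-I * c * y) * cexp (-α * y ^ 2 / 2) := by
  have hb : 0 < ((α : ℂ) / 2).re := by simpa using hα
  convert integrable_cexp_quadratic hb (-I * c) 0 using 2 with y
  rw [← Complex.exp_add]
  ring_nf

theorem integral_cexp_neg_I_mul_mul_gaussian {α : ℝ} (hα : 0 < α) (c : ℂ) :
    ∫ y : ℝ, cexp (-I * c * y) * cexp (-α * y ^ 2 / 2)
      = (√(2 * π / α) : ℂ) * cexp (-c ^ 2 / (2 * α)) := by
  have hb : 0 < ((α : ℂ) / 2).re := by simpa using hα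
  have h := fourierIntegral_gaussian hb (-c)
  have hconst : (π : ℂ) / (α / 2) = ((2 * π / α : ℝ) : ℂ) := by push_cast; ring
  rw [hconst, ofReal_cpow_one_div_two_eq_sqrt (by positivity)] at h
  convert h using 3 with y
  · ring_nf
  · ring_nf

theorem integral_mul_integral_cexp_mul_swap {g ω : ℝ → ℂ} (hg : Integrable g)
    (hω : Integrable ω) (k : ℝ) :
    ∫ y : ℝ, g y * ∫ x' : ℝ, cexp (I * k * y * x') * ω x'
      = ∫ x' : ℝ, (∫ y : ℝ, g y * cexp (I * k * y * x')) * ω x' := by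
  have hF : Integrable (Function.uncurry fun y x' : ℝ => cexp (I * k * y * x') * (g y * ω x'))
      (volume.prod volume) := by
    refine (hg.mul_prod hω).bdd_mul (c := 1) (by fun_prop) (.of_forall fun p => ?_)
    have : I * k * p.1 * p.2 = I * ((k * p.1 * p.2 : ℝ) : ℂ) := by push_cast; ring
    rw [this, norm_exp_I_mul_ofReal]
  calc ∫ y : ℝ, g y * ∫ x' : ℝ, cexp (I * k * y * x') * ω x'
      = ∫ y : ℝ, ∫ x' : ℝ, cexp (I * k * y * x') * (g y * ω x') := by
        congr 1 with y; rw [← integral_const_mul]; congr 1 with x'; ring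
    _ = ∫ x' : ℝ, ∫ y : ℝ, cexp (I * k * y * x') * (g y * ω x') := integral_integral_swap hF
    _ = ∫ x' : ℝ, (∫ y : ℝ, g y * cexp (I * k * y * x')) * ω x' := by
        congr 1 with x'; rw [← integral_mul_const]; congr 1 with y; ring

theorem one_div_two_pi_mul_sqrt_two_pi_div {α : ℝ} (hα : 0 < α) :
    1 / (2 * π) * √(2 * π / α) = 1 / √(2 * π * α) := by
  have h2π : 0 < 2 * π := by positivity
  have hprod : √(2 * π * α) * √(2 * π / α) = 2 * π := by
    rw [← Real.sqrt_mul (by positivity), show 2 * π * α * (2 * π / α) = (2 * π) ^ 2 by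
      field_simp, Real.sqrt_sq h2π.le]
  have : √(2 * π * α) ≠ 0 := by positivity
  field_simp
  linarith

/-- The one-mode covariant bosonic Gaussian channel
F(q,p) → F(kq,kp)·e^{−α(q²+p²)/2}, acting on an optical tomogram ω at a fixed
phase, is the integral operator with Gaussian kernel
(1/√(2πα))·e^{−(x−kx')²/(2α)}. -/
theorem covariant_channel_gaussian_kernel
    (α : ℝ) (hα : 0 < α) (k : ℝ) (ω : ℝ → ℂ) (hω : Integrable ω) (x : ℝ) :
    (1 / (2 * (Real.pi : ℂ))) *
      ∫ y : ℝ, Complex.exp (-Complex.I * (x : ℂ) * (y : ℂ))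
        * Complex.exp (-(α : ℂ) * (y : ℂ) ^ 2 / 2)
        * ∫ x' : ℝ, Complex.exp (Complex.I * (k : ℂ) * (y : ℂ) * (x' : ℂ)) * ω x'
    = (1 / (Real.sqrt (2 * Real.pi * α) : ℂ)) *
        ∫ x' : ℝ, Complex.exp (-((x : ℂ) - (k : ℂ) * (x' : ℂ)) ^ 2 / (2 * (α : ℂ)))
          * ω x' := by
  have hinner (x' : ℝ) :
      ∫ y : ℝ, cexp (-I * x * y) * cexp (-α * y ^ 2 / 2) * cexp (I * k * y * x')
      = (√(2 * π / α) : ℂ) * cexp (-(x - k * x') ^ 2 / (2 * α)) := by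
    rw [← integral_cexp_neg_I_mul_mul_gaussian hα]
    congr 1 with y
    rw [mul_right_comm, ← Complex.exp_add]
    ring_nf
  rw [integral_mul_integral_cexp_mul_swap (integrable_cexp_neg_I_mul_mul_gaussian hα x) hω]
  simp_rw [hinner, mul_assoc, integral_const_mul, ← mul_assoc]
  congr 1
  exact_mod_cast one_div_two_pi_mul_sqrt_two_pi_div hα
end
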